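/- Let (I,R) be an orthoframe and let Ω₀ be the set of all orthopairpropositions of (I,R). Then Ω₀, with the order ⟨A₁,A₀⟩ ≤ ⟨B₁,B₀⟩ iff A₁ ⊆ B₁ and B₀ ⊆ A₀, fuzzy complement ⟨A₁,A₀⟩^− = ⟨A₀,A₁⟩, intuitionistic complement ⟨A₁,A₀⟩^∼ = ⟨A₀,A₀′⟩, minimum ⟨∅,I⟩ and maximum ⟨I,∅⟩, is a complete BZ-lattice in which the infimum of a family {⟨A₁ⁿ,A₀ⁿ⟩} is ⟨⋂ₙ A₁ⁿ, (⋃ₙ A₀ⁿ)″⟩ and the supremum is ⟨(⋃ₙ A₁ⁿ)″, ⋂ₙ A₀ⁿ⟩; moreover, with □p := ⟨A₁,A₁′⟩ for p = ⟨A₁,A₀⟩ and ◇p := (□(p^−))^−, the following hold for all p, q ∈ Ω₀: (i) □p = p^{−∼}; (ii) p^∼ = □(p^−); (iii) ◇p = p^{∼−}; (iv) (p ⊓ q)^∼ = p^∼ ⊔ q^∼ (strong de Morgan law); (v) p ⊓ q^{∼∼} ≤ p^{−∼} ⊔ q. -/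
import Mathlib


variable {I : Type*}

/-- The orthocomplement of a set of worlds in an orthoframe `(I, R)`. -/
def ocompl (R : I → I → Prop) (X : Set I) : Set I :=
  {i | ∀ j ∈ X, ¬ R i j}

/-- `X` is a proposition of the orthoframe `(I, R)`: `X = X″`. -/
def IsProp (R : I → I → Prop) (X : Set I) : Prop :=
  X = ocompl R (ocompl R X)

/-- An orthopairproposition: a pair `⟨A₁, A₀⟩` of propositions with `A₁ ⊆ A₀′`. -/
def IsOPP (R : I → I → Prop) (p : Set I × Set I) : Prop :=
  IsProp R p.1 ∧ IsProp R p.2 ∧ p.1 ⊆ ocompl R p.2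

/-- The order on orthopairpropositions. -/
def ople (p q : Set I × Set I) : Prop := p.1 ⊆ q.1 ∧ q.2 ⊆ p.2

/-- The fuzzy complement `⟨A₁, A₀⟩^− = ⟨A₀, A₁⟩`. -/
def fneg (p : Set I × Set I) : Set I × Set I := (p.2, p.1)

/-- The intuitionistic complement `⟨A₁, A₀⟩^∼ = ⟨A₀, A₀′⟩`. -/
def ineg (R : I → I → Prop) (p : Set I × Set I) : Set I × Set I :=
  (p.2, ocompl R p.2)

/-- Binary meet of orthopairpropositions. -/
def omeet (R : I → I → Prop) (p q : Set I × Set I) : Set I × Set I :=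
  (p.1 ∩ q.1, ocompl R (ocompl R (p.2 ∪ q.2)))

/-- Binary join of orthopairpropositions. -/
def ojoin (R : I → I → Prop) (p q : Set I × Set I) : Set I × Set I :=
  (ocompl R (ocompl R (p.1 ∪ q.1)), p.2 ∩ q.2)

/-- The minimum `⟨∅, I⟩`. -/
def obot (I : Type*) : Set I × Set I := (∅, Set.univ)

/-- The maximum `⟨I, ∅⟩`. -/
def otop (I : Type*) : Set I × Set I := (Set.univ, ∅)

/-- Infimum of a family of orthopairpropositions. -/
def oInf (R : I → I → Prop) (S : Set (Set I × Set I)) : Set I × Set I :=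
  (⋂ p ∈ S, p.1, ocompl R (ocompl R (⋃ p ∈ S, p.2)))

/-- Supremum of a family of orthopairpropositions. -/
def oSup (R : I → I → Prop) (S : Set (Set I × Set I)) : Set I × Set I :=
  (ocompl R (ocompl R (⋃ p ∈ S, p.1)), ⋂ p ∈ S, p.2)

/-- The necessity operator `□⟨A₁, A₀⟩ = ⟨A₁, A₁′⟩`. -/
def obox (R : I → I → Prop) (p : Set I × Set I) : Set I × Set I :=
  (p.1, ocompl R p.1)

/-- The possibility operator `◇p = (□(p^−))^−`. -/
def odia (R : I → I → Prop) (p : Set I × Set I) : Set I × Set I :=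
  fneg (obox R (fneg p))


section Aux
variable {R : I → I → Prop}

lemma ocompl_anti {X Y : Set I} (h : X ⊆ Y) : ocompl R Y ⊆ ocompl R X :=
  fun i hi j hj => hi j (h hj)

lemma subset_oo (hs : Symmetric R) (X : Set I) : X ⊆ ocompl R (ocompl R X) :=
  fun i hi j hj hR => hj i hi (hs hR)

lemma oo_mono (hs : Symmetric R) {X Y : Set I} (h : X ⊆ Y) :
    ocompl R (ocompl R X) ⊆ ocompl R (ocompl R Y) :=
  ocompl_anti (ocompl_anti h)

lemma triple_ocompl (hs : Symmetric R) (X : Set I) :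
    ocompl R (ocompl R (ocompl R X)) = ocompl R X :=
  subset_antisymm (ocompl_anti (subset_oo hs X)) (subset_oo hs (ocompl R X))

lemma isProp_ocompl (hs : Symmetric R) (X : Set I) : IsProp R (ocompl R X) :=
  (triple_ocompl hs X).symm

lemma subset_ocompl_comm (hs : Symmetric R) {X Y : Set I} (h : X ⊆ ocompl R Y) :
    Y ⊆ ocompl R X :=
  fun j hj i hi hR => h hi j hj (hs hR)

lemma inter_ocompl_empty (hr : Reflexive R) {X Y : Set I} (h : X ⊆ ocompl R Y) :
    X ∩ Y = (∅ : Set I) := by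
  ext i; simp only [Set.mem_inter_iff, Set.mem_empty_iff_false, iff_false]
  rintro ⟨h1, h2⟩; exact h h1 i h2 (hr i)

lemma ocompl_empty : ocompl R (∅ : Set I) = Set.univ := by
  ext i; simp [ocompl]

lemma ocompl_univ (hr : Reflexive R) : ocompl R (Set.univ : Set I) = ∅ := by
  ext i
  simp only [Set.mem_empty_iff_false, iff_false]
  intro hi
  exact hi i trivial (hr i)

lemma isProp_empty (hr : Reflexive R) : IsProp R (∅ : Set I) := by
  unfold IsProp; rw [ocompl_empty, ocompl_univ hr]

lemma isProp_univ (hr : Reflexive R) : IsProp R (Set.univ : Set I) := by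
  unfold IsProp; rw [ocompl_univ hr, ocompl_empty]

lemma isProp_inter (hs : Symmetric R) {X Y : Set I}
    (hX : IsProp R X) (hY : IsProp R Y) : IsProp R (X ∩ Y) := by
  refine subset_antisymm (subset_oo hs _) ?_
  intro i hi
  constructor
  · exact hX ▸ (oo_mono hs Set.inter_subset_left hi)
  · exact hY ▸ (oo_mono hs Set.inter_subset_right hi)

lemma isProp_biInter (hs : Symmetric R) {S : Set (Set I × Set I)}
    {f : Set I × Set I → Set I} (hf : ∀ p ∈ S, IsProp R (f p)) :
    IsProp R (⋂ p ∈ S, f p) := by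
  refine subset_antisymm (subset_oo hs _) ?_
  intro i hi
  refine Set.mem_biInter fun p hp => ?_
  exact (hf p hp) ▸ (oo_mono hs (Set.biInter_subset_of_mem hp) hi)

end Aux

/-- The set of all orthopairpropositions of an orthoframe forms a complete
BZ-lattice, with the stated infima, suprema and modal operators. -/
theorem stmt_18 [Nonempty I] (R : I → I → Prop)
    (hrefl : Reflexive R) (hsymm : Symmetric R) :
    -- closure of the set of orthopairpropositions under the operations
    (∀ p, IsOPP R p → IsOPP R (fneg p) ∧ IsOPP R (ineg R p)) ∧
    (∀ p q, IsOPP R p → IsOPP R q → IsOPP R (omeet R p q) ∧ IsOPP R (ojoin R p q)) ∧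
    IsOPP R (obot I) ∧ IsOPP R (otop I) ∧
    (∀ S : Set (Set I × Set I), (∀ p ∈ S, IsOPP R p) →
      IsOPP R (oInf R S) ∧ IsOPP R (oSup R S)) ∧
    -- `ople` is a partial order with minimum `⟨∅, I⟩` and maximum `⟨I, ∅⟩`
    (∀ p, IsOPP R p → ople p p ∧ ople (obot I) p ∧ ople p (otop I)) ∧
    (∀ p q, IsOPP R p → IsOPP R q → ople p q → ople q p → p = q) ∧
    (∀ p q r : Set I × Set I, ople p q → ople q r → ople p r) ∧
    -- `omeet`/`ojoin` are binary infima/suprema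
    (∀ p q, IsOPP R p → IsOPP R q →
      (ople (omeet R p q) p ∧ ople (omeet R p q) q ∧
        ∀ r, IsOPP R r → ople r p → ople r q → ople r (omeet R p q)) ∧
      (ople p (ojoin R p q) ∧ ople q (ojoin R p q) ∧
        ∀ r, IsOPP R r → ople p r → ople q r → ople (ojoin R p q) r)) ∧
    -- `oInf`/`oSup` are infima/suprema of arbitrary families
    (∀ S : Set (Set I × Set I), (∀ p ∈ S, IsOPP R p) →
      ((∀ p ∈ S, ople (oInf R S) p) ∧
        ∀ r, IsOPP R r → (∀ p ∈ S, ople r p) → ople r (oInf R S)) ∧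
      ((∀ p ∈ S, ople p (oSup R S)) ∧
        ∀ r, IsOPP R r → (∀ p ∈ S, ople p r) → ople (oSup R S) r)) ∧
    -- the fuzzy complement is an order-reversing regular involution
    (∀ p, IsOPP R p → fneg (fneg p) = p) ∧
    (∀ p q, IsOPP R p → IsOPP R q → ople p q → ople (fneg q) (fneg p)) ∧
    (∀ p q, IsOPP R p → IsOPP R q →
      ople (omeet R p (fneg p)) (ojoin R q (fneg q))) ∧
    -- the intuitionistic complement axioms
    (∀ p, IsOPP R p → omeet R p (ineg R p) = obot I) ∧
    (∀ p, IsOPP R p → ople p (ineg R (ineg R p))) ∧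
    (∀ p q, IsOPP R p → IsOPP R q → ople p q → ople (ineg R q) (ineg R p)) ∧
    (∀ p, IsOPP R p → fneg (ineg R p) = ineg R (ineg R p)) ∧
    -- (i) `□p = p^{−∼}`
    (∀ p, IsOPP R p → obox R p = ineg R (fneg p)) ∧
    -- (ii) `p^∼ = □(p^−)`
    (∀ p, IsOPP R p → ineg R p = obox R (fneg p)) ∧
    -- (iii) `◇p = p^{∼−}`
    (∀ p, IsOPP R p → odia R p = fneg (ineg R p)) ∧
    -- (iv) strong de Morgan law
    (∀ p q, IsOPP R p → IsOPP R q →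
      ineg R (omeet R p q) = ojoin R (ineg R p) (ineg R q)) ∧
    -- (v) `p ⊓ q^{∼∼} ≤ p^{−∼} ⊔ q`
    (∀ p q, IsOPP R p → IsOPP R q →
      ople (omeet R p (ineg R (ineg R q))) (ojoin R (ineg R (fneg p)) q))  := by
  have oo := subset_oo (R := R) hsymm
  have tri := triple_ocompl (R := R) hsymm
  refine ⟨?_, ?_, ?_, ?_, ?_, ?_, ?_, ?_, ?_, ?_, ?_, ?_, ?_, ?_, ?_, ?_, ?_,
    ?_, ?_, ?_, ?_, ?_⟩
  · -- fneg, ineg closure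
    rintro p ⟨h1, h2, h12⟩
    exact ⟨⟨h2, h1, subset_ocompl_comm hsymm h12⟩,
      ⟨h2, isProp_ocompl hsymm _, oo _⟩⟩
  · -- omeet, ojoin closure
    rintro p q ⟨hp1, hp2, hp12⟩ ⟨hq1, hq2, hq12⟩
    refine ⟨⟨isProp_inter hsymm hp1 hq1, isProp_ocompl hsymm _, ?_⟩,
      ⟨isProp_ocompl hsymm _, isProp_inter hsymm hp2 hq2, ?_⟩⟩
    · show p.1 ∩ q.1 ⊆ ocompl R (ocompl R (ocompl R (p.2 ∪ q.2)))
      rw [tri]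
      rintro i ⟨hip, hiq⟩ j hj
      rcases hj with hj | hj
      · exact hp12 hip j hj
      · exact hq12 hiq j hj
    · have h : p.1 ∪ q.1 ⊆ ocompl R (p.2 ∩ q.2) := by
        rintro i (hi | hi) j ⟨hj1, hj2⟩
        · exact hp12 hi j hj1
        · exact hq12 hi j hj2
      intro i hi
      exact (isProp_ocompl hsymm (p.2 ∩ q.2)) ▸ oo_mono hsymm h hi
  · exact ⟨isProp_empty hrefl, isProp_univ hrefl, Set.empty_subset _⟩
  · exact ⟨isProp_univ hrefl, isProp_empty hrefl,
      fun i _ j hj => absurd hj (Set.notMem_empty j)⟩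
  · -- oInf, oSup closure
    intro S hS
    refine ⟨⟨isProp_biInter hsymm (fun p hp => (hS p hp).1),
        isProp_ocompl hsymm _, ?_⟩,
      ⟨isProp_ocompl hsymm _,
        isProp_biInter hsymm (fun p hp => (hS p hp).2.1), ?_⟩⟩
    · show (⋂ p ∈ S, p.1) ⊆ ocompl R (ocompl R (ocompl R (⋃ p ∈ S, p.2)))
      rw [tri]
      intro i hi j hj
      rcases Set.mem_iUnion₂.1 hj with ⟨p, hp, hjp⟩
      exact (hS p hp).2.2 (Set.mem_iInter₂.mp hi p hp) j hjp
    · have h : (⋃ p ∈ S, p.1) ⊆ ocompl R (⋂ p ∈ S, p.2) := by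
        intro i hi j hj
        rcases Set.mem_iUnion₂.1 hi with ⟨p, hp, hip⟩
        exact (hS p hp).2.2 hip j (Set.mem_iInter₂.mp hj p hp)
      intro i hi
      exact (isProp_ocompl hsymm _) ▸ oo_mono hsymm h hi
  · -- refl, bot, top
    rintro p ⟨_, _, _⟩
    exact ⟨⟨le_refl _, le_refl _⟩,
      ⟨Set.empty_subset _, Set.subset_univ _⟩,
      ⟨Set.subset_univ _, Set.empty_subset _⟩⟩
  · rintro p q _ _ ⟨h1, h2⟩ ⟨h3, h4⟩
    exact Prod.ext (subset_antisymm h1 h3) (subset_antisymm h4 h2)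
  · rintro p q r ⟨h1, h2⟩ ⟨h3, h4⟩
    exact ⟨h1.trans h3, h4.trans h2⟩
  · -- binary lattice laws
    rintro p q ⟨hp1, hp2, _⟩ ⟨hq1, hq2, _⟩
    refine ⟨⟨⟨Set.inter_subset_left, fun i hi => oo_mono hsymm
        Set.subset_union_left (hp2 ▸ oo _ hi)⟩,
      ⟨Set.inter_subset_right, fun i hi => oo_mono hsymm
        Set.subset_union_right (hq2 ▸ oo _ hi)⟩, ?_⟩,
      ⟨⟨fun i hi => oo_mono hsymm Set.subset_union_left (hp1 ▸ oo _ hi),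
        Set.inter_subset_left⟩,
      ⟨fun i hi => oo_mono hsymm Set.subset_union_right (hq1 ▸ oo _ hi),
        Set.inter_subset_right⟩, ?_⟩⟩
    · rintro r ⟨_, hr2, _⟩ ⟨h1, h2⟩ ⟨h3, h4⟩
      refine ⟨Set.subset_inter h1 h3, ?_⟩
      intro i hi
      exact hr2 ▸ oo_mono hsymm (Set.union_subset h2 h4) hi
    · rintro r ⟨hr1, _, _⟩ ⟨h1, h2⟩ ⟨h3, h4⟩
      refine ⟨?_, Set.subset_inter h2 h4⟩
      intro i hi
      exact hr1 ▸ oo_mono hsymm (Set.union_subset h1 h3) hi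
  · -- complete lattice laws
    intro S hS
    refine ⟨⟨fun p hp => ⟨Set.biInter_subset_of_mem hp,
        fun i hi => oo_mono hsymm (Set.subset_biUnion_of_mem hp) (((hS p hp).2.1) ▸ oo _ hi)⟩, ?_⟩,
      ⟨fun p hp => ⟨fun i hi => oo_mono hsymm (Set.subset_biUnion_of_mem hp)
          (((hS p hp).1) ▸ oo _ hi), Set.biInter_subset_of_mem hp⟩, ?_⟩⟩
    · rintro r ⟨_, hr2, _⟩ h
      refine ⟨Set.subset_iInter₂ fun p hp => (h p hp).1, ?_⟩
      intro i hi
      exact hr2 ▸ oo_mono hsymm (Set.iUnion₂_subset fun p hp => (h p hp).2) hi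
    · rintro r ⟨hr1, _, _⟩ h
      refine ⟨?_, Set.subset_iInter₂ fun p hp => (h p hp).2⟩
      intro i hi
      exact hr1 ▸ oo_mono hsymm (Set.iUnion₂_subset fun p hp => (h p hp).1) hi
  · intro p _; rfl
  · rintro p q _ _ ⟨h1, h2⟩; exact ⟨h2, h1⟩
  · -- Kleene
    rintro p q ⟨_, _, hp12⟩ ⟨_, _, hq12⟩
    have h1 : p.1 ∩ p.2 = (∅ : Set I) := inter_ocompl_empty hrefl hp12
    have h2 : q.2 ∩ q.1 = (∅ : Set I) := by
      rw [Set.inter_comm]; exact inter_ocompl_empty hrefl hq12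
    constructor
    · show p.1 ∩ p.2 ⊆ _
      rw [h1]; exact Set.empty_subset _
    · show q.2 ∩ q.1 ⊆ _
      rw [h2]; exact Set.empty_subset _
  · -- p ⊓ p^∼ = 0
    rintro p ⟨_, hp2, hp12⟩
    unfold omeet ineg obot
    refine Prod.ext ?_ ?_
    · exact inter_ocompl_empty hrefl hp12
    · show ocompl R (ocompl R (p.2 ∪ ocompl R p.2)) = Set.univ
      have h : ocompl R (p.2 ∪ ocompl R p.2) = (∅ : Set I) := by
        ext i
        simp only [Set.mem_empty_iff_false, iff_false]
        intro hi
        have hi' : i ∈ ocompl R p.2 := fun j hj => hi j (Or.inl hj)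
        exact hi i (Or.inr hi') (hrefl i)
      rw [h, ocompl_empty]
  · rintro p ⟨_, hp2, hp12⟩
    exact ⟨hp12, le_of_eq hp2.symm⟩
  · rintro p q _ _ ⟨h1, h2⟩
    exact ⟨h2, ocompl_anti h2⟩
  · rintro p ⟨_, hp2, _⟩
    exact Prod.ext rfl hp2
  · intro p _; rfl
  · intro p _; rfl
  · intro p _; rfl
  · -- strong de Morgan
    rintro p q ⟨_, hp2, _⟩ ⟨_, hq2, _⟩
    unfold ineg omeet ojoin
    refine Prod.ext ?_ ?_
    · show _ = ocompl R (ocompl R (p.2 ∪ q.2)); rfl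
    · show ocompl R (ocompl R (ocompl R (p.2 ∪ q.2))) = ocompl R p.2 ∩ ocompl R q.2
      rw [tri]
      ext i
      constructor
      · intro hi
        exact ⟨fun j hj => hi j (Or.inl hj), fun j hj => hi j (Or.inr hj)⟩
      · rintro ⟨h1, h2⟩ j (hj | hj)
        · exact h1 j hj
        · exact h2 j hj
  · -- (v)
    rintro p q ⟨hp1, _, _⟩ ⟨_, hq2, _⟩
    constructor
    · show p.1 ∩ _ ⊆ ocompl R (ocompl R (p.1 ∪ q.1))
      exact fun i hi => oo_mono hsymm Set.subset_union_left (hp1 ▸ oo _ hi.1)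
    · show ocompl R p.1 ∩ q.2 ⊆ ocompl R (ocompl R (p.2 ∪ ocompl R (ocompl R q.2)))
      intro i hi
      refine oo_mono hsymm ?_ (hq2 ▸ oo _ hi.2)
      exact fun j hj => Or.inr (hq2 ▸ hj)
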